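/- Let A be a complete lattice. For all a, b : A, a ≤ b holds if and only if for every monotone open predicate P : A → Bool, P a = true implies P b = true. -/
import Mathlib

/-- A Boolean predicate on a complete lattice is open if it maps limits of
monotone sequences of `false`-elements to `false`. -/
def IsOpenPred {A : Type*} [CompleteLattice A] (P : A → Bool) : Prop :=
  ∀ a : ℕ → A, Monotone a → (∀ n : ℕ, P (a n) = false) → P (⨆ n, a n) = false

/-- A Boolean predicate is monotone if it preserves the order. -/
def IsMonoPred {A : Type*} [CompleteLattice A] (P : A → Bool) : Prop :=
  ∀ a b : A, a ≤ b → P a = true → P b = true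

/-- In a complete lattice, `a ≤ b` iff every monotone open
Boolean predicate satisfied by `a` is satisfied by `b`. -/
theorem le_iff_forall_mono_open_pred
    {A : Type*} [CompleteLattice A] (a b : A) :
    a ≤ b ↔ ∀ P : A → Bool, IsMonoPred P → IsOpenPred P →
      (P a = true → P b = true) := by
  constructor
  · intro hab P hmono _ ha
    exact hmono a b hab ha
  · intro h
    classical
    by_contra hab
    have := h (fun c => decide ¬ (c ≤ b))
      (fun x y hxy hx => by
        simp only [decide_eq_true_eq] at *
        exact fun hyb => hx (hxy.trans hyb))
      (fun s hs hfalse => by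
        simp only [decide_eq_false_iff_not, not_not] at *
        exact iSup_le hfalse)
      (by simp [hab])
    simp at this
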